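/- If S is a unital epsilon-strongly G-graded ring, then for every g ∈ G the left R-module S_{g⁻¹} is finitely generated projective, and the map η'_g: S_g → Hom_R(S_{g⁻¹}, R) defined by η'_g(s)(t) = ts is an isomorphism of left R-modules, where R = S_e. -/

import Mathlib

/-!
Write `ε_g = ∑ aᵢ bᵢ` with `aᵢ ∈ S_g`, `bᵢ ∈ S_{g⁻¹}`. For `t ∈ S_{g⁻¹}` we get
`t = t ε_g = ∑ (t aᵢ) bᵢ` with `t aᵢ = η'_g(aᵢ)(t) ∈ R`, so the `bᵢ` together with the coordinate
functions `η'_g(aᵢ)` form a finite dual basis: `S_{g⁻¹}` is a direct summand of `Rⁿ`.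
Dually, `s = ε_g s = ∑ aᵢ (bᵢ s)` for `s ∈ S_g` shows that `φ ↦ ∑ aᵢ φ(bᵢ)` inverts `η'_g`.
-/

open Pointwise

section Defs

variable {G : Type} [AddGroup G] [DecidableEq G]
variable {A : Type} [Ring A]
variable {M : Type} [AddCommGroup M] [Module A M]

/-- The additive subgroup of `M` consisting of finite sums of products `a • m`
with `a ∈ S` and `m ∈ N`. -/
def prodSMul (S : AddSubgroup A) (N : AddSubgroup M) : AddSubgroup M where
  __ := S.toAddSubmonoid • N.toAddSubmonoid
  neg_mem' {x} hx := by
    refine AddSubmonoid.smul_induction_on hx (fun a ha m hm => ?_) (fun x y hx hy => ?_)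
    · rw [show -(a • m) = (-a) • m by rw [neg_smul]]
      exact AddSubmonoid.smul_mem_smul (S.neg_mem ha) hm
    · rw [neg_add]
      exact (S.toAddSubmonoid • N.toAddSubmonoid).add_mem hx hy

/-- A (possibly non-unital) ring, here an additive subgroup of `A` closed under
multiplication, is *s-unital* if every element has a left and a right local unit in it. -/
def IsSUnitalSub (I : AddSubgroup A) : Prop :=
  ∀ a ∈ I, ∃ u ∈ I, ∃ v ∈ I, u * a = a ∧ a * v = a

variable (𝒜 : G → AddSubgroup A)

/-- `S` is symmetrically graded if `S_g S_{g⁻¹} S_g = S_g` for all `g`. -/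
def IsSymmetricallyGraded : Prop := ∀ g : G, 𝒜 g * 𝒜 (-g) * 𝒜 g = 𝒜 g

/-- `S` is nearly epsilon-strongly graded if each `S_g` is an s-unital
`(S_g S_{g⁻¹}, S_{g⁻¹} S_g)`-bimodule: for every `s ∈ S_g` there are
`u ∈ S_g S_{g⁻¹}` and `v ∈ S_{g⁻¹} S_g` with `u s = s = s v`. -/
def IsNearlyEpsilonStrong : Prop :=
  ∀ g : G, ∀ s ∈ 𝒜 g, ∃ u ∈ 𝒜 g * 𝒜 (-g), ∃ v ∈ 𝒜 (-g) * 𝒜 g, u * s = s ∧ s * v = s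


section Stmt8

variable {G : Type} [AddGroup G] [DecidableEq G]
variable {A : Type} [Ring A] (𝒜 : G → AddSubgroup A) [GradedRing 𝒜]

/-- The left `R = S_e`-module structure on the homogeneous component `S_g`
given by multiplication. -/
instance gradeSMul (g : G) : SMul ↥(𝒜 0) ↥(𝒜 g) :=
  ⟨fun r s => ⟨r.1 * s.1, by
    have := SetLike.mul_mem_graded r.2 s.2; rwa [zero_add] at this⟩⟩

@[simp] lemma gradeSMul_coe (g : G) (r : ↥(𝒜 0)) (s : ↥(𝒜 g)) :
    ((r • s : ↥(𝒜 g)) : A) = r.1 * s.1 := rfl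

instance gradeModule (g : G) : Module ↥(𝒜 0) ↥(𝒜 g) where
  one_smul s := Subtype.ext (one_mul s.1)
  mul_smul r r' s := Subtype.ext (mul_assoc r.1 r'.1 s.1)
  smul_zero r := Subtype.ext (mul_zero r.1)
  smul_add r s t := Subtype.ext (mul_add r.1 s.1 t.1)
  add_smul r r' s := Subtype.ext (add_mul r.1 r'.1 s.1)
  zero_smul s := Subtype.ext (zero_mul s.1)

/-- The map `η'_g : S_g → Hom_R(S_{g⁻¹}, R)`, `η'_g(s)(t) = t s`. -/
def etaMap (g : G) (s : ↥(𝒜 g)) : ↥(𝒜 (-g)) →ₗ[↥(𝒜 0)] ↥(𝒜 0) where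
  toFun t := ⟨t.1 * s.1, by
    have := SetLike.mul_mem_graded t.2 s.2; rwa [neg_add_cancel] at this⟩
  map_add' t t' := Subtype.ext (add_mul t.1 t'.1 s.1)
  map_smul' r t := Subtype.ext (mul_assoc r.1 t.1 s.1)

theorem exists_fin_sum_mul_eq_of_mem_mul {A : Type*} [NonUnitalNonAssocRing A]
    {S T : AddSubgroup A} {x : A} (hx : x ∈ S * T) :
    ∃ (n : ℕ) (a : Fin n → S) (b : Fin n → T), ∑ i, (a i : A) * b i = x := by
  refine AddSubmonoid.mul_induction_on (M := S.toAddSubmonoid) (N := T.toAddSubmonoid)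
    (C := fun x => ∃ (n : ℕ) (a : Fin n → S) (b : Fin n → T), ∑ i, (a i : A) * b i = x) hx
    (fun s hs t ht => ⟨1, fun _ => ⟨s, hs⟩, fun _ => ⟨t, ht⟩, by simp⟩) ?_
  rintro x y ⟨m, a, b, rfl⟩ ⟨n, c, d, rfl⟩
  exact ⟨m + n, Fin.append a c, Fin.append b d, by simp [Fin.sum_univ_add]⟩

lemma etaMap_apply_coe (g : G) (s : ↥(𝒜 g)) (t : ↥(𝒜 (-g))) :
    ((etaMap 𝒜 g s t : ↥(𝒜 0)) : A) = t * s := rfl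

lemma etaMap_add (g : G) (s₁ s₂ : ↥(𝒜 g)) :
    etaMap 𝒜 g (s₁ + s₂) = etaMap 𝒜 g s₁ + etaMap 𝒜 g s₂ :=
  LinearMap.ext fun t => Subtype.ext (mul_add t.1 s₁.1 s₂.1)

section DualBasis

variable {𝒜} {g : G} {n : ℕ} (a : Fin n → ↥(𝒜 g)) (b : Fin n → ↥(𝒜 (-g)))

def etaInv (φ : ↥(𝒜 (-g)) →ₗ[↥(𝒜 0)] ↥(𝒜 0)) : ↥(𝒜 g) :=
  ⟨∑ i, (a i : A) * φ (b i), AddSubgroup.sum_mem _ fun i _ => by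
    simpa only [add_zero] using SetLike.mul_mem_graded (a i).2 (φ (b i)).2⟩

lemma sum_etaMap_smul (hright : ∀ t : ↥(𝒜 (-g)), (t : A) * ∑ i, (a i : A) * b i = t)
    (t : ↥(𝒜 (-g))) : ∑ i, etaMap 𝒜 g (a i) t • b i = t := by
  apply Subtype.ext
  simp only [AddSubmonoidClass.coe_finsetSum, gradeSMul_coe, etaMap_apply_coe, mul_assoc,
    ← Finset.mul_sum, hright]

lemma linearCombination_comp_pi_etaMap
    (hright : ∀ t : ↥(𝒜 (-g)), (t : A) * ∑ i, (a i : A) * b i = t) :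
    Fintype.linearCombination ↥(𝒜 0) b ∘ₗ LinearMap.pi (fun i => etaMap 𝒜 g (a i)) =
      LinearMap.id :=
  LinearMap.ext (sum_etaMap_smul a b hright)

lemma etaInv_etaMap (hleft : ∀ s : ↥(𝒜 g), (∑ i, (a i : A) * b i) * s = s) (s : ↥(𝒜 g)) :
    etaInv a b (etaMap 𝒜 g s) = s := by
  apply Subtype.ext
  simp only [etaInv, etaMap_apply_coe, ← mul_assoc, ← Finset.sum_mul, hleft]

lemma etaMap_etaInv (hright : ∀ t : ↥(𝒜 (-g)), (t : A) * ∑ i, (a i : A) * b i = t)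
    (φ : ↥(𝒜 (-g)) →ₗ[↥(𝒜 0)] ↥(𝒜 0)) : etaMap 𝒜 g (etaInv a b φ) = φ := by
  ext t
  calc (t : A) * ∑ i, (a i : A) * φ (b i)
      = ((∑ i, φ (etaMap 𝒜 g (a i) t • b i) : ↥(𝒜 0)) : A) := by
        simp only [map_smul, AddSubmonoidClass.coe_finsetSum, Finset.mul_sum, smul_eq_mul]
        exact Finset.sum_congr rfl fun i _ => (mul_assoc _ _ _).symm
    _ = φ t := by rw [← map_sum, sum_etaMap_smul a b hright]

end DualBasis

/-- If `S` is unital epsilon-strongly graded, then each `S_{g⁻¹}` is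
a finitely generated projective left `R`-module and `η'_g : S_g → Hom_R(S_{g⁻¹}, R)`,
`η'_g(s)(t) = t s`, is an isomorphism of left `R`-modules. -/
theorem fg_projective_and_eta_bijective
    (ε : G → A)
    (hmem : ∀ g : G, ε g ∈ 𝒜 g * 𝒜 (-g))
    (hunit : ∀ g : G, ∀ s ∈ 𝒜 g, ε g * s = s ∧ s * ε (-g) = s)
    (g : G) :
    Module.Finite ↥(𝒜 0) ↥(𝒜 (-g)) ∧ Module.Projective ↥(𝒜 0) ↥(𝒜 (-g)) ∧
      Function.Bijective (etaMap 𝒜 g) ∧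
      (∀ s₁ s₂ : ↥(𝒜 g), etaMap 𝒜 g (s₁ + s₂) = etaMap 𝒜 g s₁ + etaMap 𝒜 g s₂) := by
  obtain ⟨n, a, b, hab⟩ := exists_fin_sum_mul_eq_of_mem_mul (hmem g)
  have hright : ∀ t : ↥(𝒜 (-g)), (t : A) * ∑ i, (a i : A) * b i = t := fun t => by
    simpa only [hab, neg_neg] using (hunit (-g) t t.2).2
  have hleft : ∀ s : ↥(𝒜 g), (∑ i, (a i : A) * b i) * s = s := fun s => by
    simpa only [hab] using (hunit g s s.2).1
  have hsplit := linearCombination_comp_pi_etaMap a b hright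
  have hsurj : Function.Surjective (Fintype.linearCombination ↥(𝒜 0) b) :=
    fun t => ⟨_, LinearMap.congr_fun hsplit t⟩
  exact ⟨.of_surjective _ hsurj, .of_split _ _ hsplit,
    Function.bijective_iff_has_inverse.2
      ⟨etaInv a b, etaInv_etaMap a b hleft, etaMap_etaInv a b hright⟩,
    etaMap_add 𝒜 g⟩

end Stmt8
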